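/- For every integer n ≥ 2, the left ideal Ac* decomposes as an internal direct sum of left ideals Ac* = A(c*)ⁿ ⊕ Ad*c* ⊕ Ad*(c*)² ⊕ ⋯ ⊕ Ad*(c*)^{n−1}. -/

import Mathlib

noncomputable section

/-- The relation `X * Y = 1` defining the Jacobson algebra. -/
def JacRel (K : Type) [Field K] : FreeAlgebra K (Fin 2) → FreeAlgebra K (Fin 2) → Prop :=
  fun a b => a = FreeAlgebra.ι K (0 : Fin 2) * FreeAlgebra.ι K (1 : Fin 2) ∧ b = 1

/-- The Jacobson algebra `K⟨X, Y ∣ XY = 1⟩`. -/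
abbrev Jac (K : Type) [Field K] := RingQuot (JacRel K)

variable (K : Type) [Field K]

/-- The generator `X`. -/
def Xg : Jac K := RingQuot.mkAlgHom K (JacRel K) (FreeAlgebra.ι K 0)
/-- The generator `Y`. -/
def Yg : Jac K := RingQuot.mkAlgHom K (JacRel K) (FreeAlgebra.ι K 1)

/-- `c* = YX²`. -/
def csE : Jac K := Yg K * Xg K ^ 2
/-- `d* = X - YX²`. -/
def dsE : Jac K := Xg K - Yg K * Xg K ^ 2

/-- For `n ≥ 2`, the family of left ideals `A(c*)ⁿ, Ad*c*, Ad*(c*)², …, Ad*(c*)^{n-1}`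
(indexed over `Fin n`, the `0`-th member being `A(c*)ⁿ`). -/
def decompFam (n : ℕ) : Fin n → Submodule (Jac K) (Jac K) := fun i =>
  if (i : ℕ) = 0 then Submodule.span (Jac K) {csE K ^ n}
  else Submodule.span (Jac K) {dsE K * csE K ^ (i : ℕ)}

/-!
Put `w = 1 - YX`. From `XY = 1` one gets `Xw = 0 = wY`, `w² = w`, and the generators take the
normal forms `(c*)ⁿ = YXⁿ⁺¹` and `d*(c*)ᵏ = wXᵏ⁺¹`. Right multiplication by `Yⁿ⁺¹Xⁿ⁺¹`, resp.
`Yᵏ⁺¹wXᵏ⁺¹`, fixes the corresponding generator and kills all the others, which gives independence.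
Since `YXc* = c*` and `c* + d* = X`, we have `(c*)ᵐ = Y(c*)ᵐ⁺¹ + Yd*(c*)ᵐ`, so by downward
induction on `m` every `(c*)ᵐ` with `1 ≤ m ≤ n`, in particular `c*`, lies in the sum.
-/

open Submodule

theorem iSupIndep_span_singleton_of_proj {R M ι : Type*} [Ring R] [AddCommGroup M] [Module R M]
    {g : ι → M} (p : ι → M →ₗ[R] M) (hself : ∀ i, p i (g i) = g i)
    (hother : ∀ i j, i ≠ j → p j (g i) = 0) :
    iSupIndep fun i => span R {g i} := by
  refine iSupIndep_def.2 fun i => disjoint_def.2 fun m hi hrest => ?_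
  obtain ⟨a, rfl⟩ := mem_span_singleton.1 hi
  have hker : (⨆ (j) (_ : j ≠ i), span R {g j}) ≤ LinearMap.ker (p i) :=
    iSup₂_le fun j hj => (span_singleton_le_iff_mem _ _).2 (hother j i hj)
  simpa only [LinearMap.mem_ker, map_smul, hself] using hker hrest

section Monoid

variable {M : Type*} [Monoid M] {x y : M}

theorem pow_add_mul_pow_of_mul_eq_one (h : x * y = 1) (a b : ℕ) : x ^ (b + a) * y ^ a = x ^ b := by
  rw [pow_add, mul_assoc, pow_mul_pow_eq_one a h, mul_one]

theorem pow_mul_pow_add_of_mul_eq_one (h : x * y = 1) (a b : ℕ) : x ^ a * y ^ (a + b) = y ^ b := by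
  rw [pow_add, ← mul_assoc, pow_mul_pow_eq_one a h, one_mul]

end Monoid

section RightInverse

variable {R : Type*} [Ring R] {x y : R}

theorem one_sub_mul_mul_pow_mul_pow_eq_zero (h : x * y = 1) {a b : ℕ} (hab : a < b) :
    (1 - y * x) * x ^ a * y ^ b = 0 := by
  obtain ⟨c, rfl⟩ : ∃ c, b = a + (c + 1) := ⟨b - a - 1, by omega⟩
  rw [mul_assoc, pow_mul_pow_add_of_mul_eq_one h, pow_succ', ← mul_assoc, sub_mul, one_mul,
    mul_assoc, h, mul_one, sub_self, zero_mul]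

theorem pow_mul_pow_mul_one_sub_mul_eq_zero (h : x * y = 1) {a b : ℕ} (hba : b < a) :
    x ^ a * y ^ b * (1 - y * x) = 0 := by
  obtain ⟨c, rfl⟩ : ∃ c, a = c + 1 + b := ⟨a - b - 1, by omega⟩
  rw [pow_add_mul_pow_of_mul_eq_one h, pow_succ, mul_assoc, mul_sub, mul_one, ← mul_assoc x, h,
    one_mul, sub_self, mul_zero]

theorem isIdempotentElem_one_sub_mul (h : x * y = 1) : IsIdempotentElem (1 - y * x) :=
  IsIdempotentElem.one_sub (by rw [IsIdempotentElem, mul_assoc, ← mul_assoc x, h, one_mul])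

theorem mul_sq_pow_succ (h : x * y = 1) (k : ℕ) : (y * x ^ 2) ^ (k + 1) = y * x ^ (k + 2) := by
  induction k with
  | zero => rw [pow_one]
  | succ k ih =>
    rw [pow_succ, ih, mul_assoc, ← mul_assoc (x ^ (k + 2)), pow_succ x (k + 1), mul_assoc _ x, h,
      mul_one, ← pow_add]

theorem sub_mul_sq_mul_pow_succ (h : x * y = 1) (k : ℕ) :
    (x - y * x ^ 2) * (y * x ^ 2) ^ (k + 1) = (1 - y * x) * x ^ (k + 2) := by
  have hx : x ^ 2 * y = x := by rw [sq, mul_assoc, h, mul_one]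
  rw [mul_sq_pow_succ h, sub_mul, ← mul_assoc, h, one_mul, mul_assoc y, ← mul_assoc (x ^ 2), hx,
    sub_mul, one_mul, mul_assoc]

theorem mul_sq_pow_eq_add (h : x * y = 1) {m : ℕ} (hm : 1 ≤ m) :
    (y * x ^ 2) ^ m = y * (y * x ^ 2) ^ (m + 1) + y * ((x - y * x ^ 2) * (y * x ^ 2) ^ m) := by
  obtain ⟨k, rfl⟩ : ∃ k, m = k + 1 := ⟨m - 1, by omega⟩
  rw [pow_succ' _ (k + 1), ← mul_add, ← add_mul, add_sub_cancel, mul_sq_pow_succ h, ← mul_assoc x,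
    h, one_mul]

variable (x y) in
def decompGen (n : ℕ) (i : Fin n) : R :=
  if (i : ℕ) = 0 then (y * x ^ 2) ^ n else (x - y * x ^ 2) * (y * x ^ 2) ^ (i : ℕ)

variable (x y) in
def decompDual (n : ℕ) (i : Fin n) : R :=
  if (i : ℕ) = 0 then y ^ (n + 1) * x ^ (n + 1)
  else y ^ ((i : ℕ) + 1) * (1 - y * x) * x ^ ((i : ℕ) + 1)

theorem decompGen_eq_of_eq_zero (h : x * y = 1) {n : ℕ} {i : Fin n} (hi : (i : ℕ) = 0) :
    decompGen x y n i = y * x ^ (n + 1) := by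
  obtain ⟨m, rfl⟩ : ∃ m, n = m + 1 := ⟨n - 1, by have := i.pos; omega⟩
  rw [decompGen, if_pos hi, mul_sq_pow_succ h]

theorem decompGen_eq_of_ne_zero (h : x * y = 1) {n : ℕ} {i : Fin n} (hi : (i : ℕ) ≠ 0) :
    decompGen x y n i = (1 - y * x) * x ^ ((i : ℕ) + 1) := by
  obtain ⟨k, hk⟩ : ∃ k, (i : ℕ) = k + 1 := ⟨i - 1, by omega⟩
  rw [decompGen, if_neg hi, hk, sub_mul_sq_mul_pow_succ h]

theorem decompGen_mul_decompDual_self (h : x * y = 1) {n : ℕ} (i : Fin n) :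
    decompGen x y n i * decompDual x y n i = decompGen x y n i := by
  by_cases hi : (i : ℕ) = 0
  · rw [decompGen_eq_of_eq_zero h hi, decompDual, if_pos hi]
    calc _ = y * (x ^ (n + 1) * y ^ (n + 1)) * x ^ (n + 1) := by simp only [mul_assoc]
      _ = _ := by rw [pow_mul_pow_eq_one _ h, mul_one]
  · rw [decompGen_eq_of_ne_zero h hi, decompDual, if_neg hi]
    calc _ = (1 - y * x) * (x ^ ((i : ℕ) + 1) * y ^ ((i : ℕ) + 1)) * (1 - y * x) *
          x ^ ((i : ℕ) + 1) := by simp only [mul_assoc]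
      _ = _ := by rw [pow_mul_pow_eq_one _ h, mul_one, (isIdempotentElem_one_sub_mul h).eq]

theorem decompGen_mul_decompDual_of_ne (h : x * y = 1) {n : ℕ} {i j : Fin n} (hij : i ≠ j) :
    decompGen x y n i * decompDual x y n j = 0 := by
  have hij' : (i : ℕ) ≠ j := Fin.val_ne_of_ne hij
  have hi_lt := i.isLt
  have hj_lt := j.isLt
  by_cases hi : (i : ℕ) = 0 <;> by_cases hj : (j : ℕ) = 0
  · omega
  · rw [decompGen_eq_of_eq_zero h hi, decompDual, if_neg hj]
    calc _ = y * (x ^ (n + 1) * y ^ ((j : ℕ) + 1) * (1 - y * x)) * x ^ ((j : ℕ) + 1) := by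
          simp only [mul_assoc]
      _ = 0 := by rw [pow_mul_pow_mul_one_sub_mul_eq_zero h (by omega), mul_zero, zero_mul]
  · rw [decompGen_eq_of_ne_zero h hi, decompDual, if_pos hj]
    calc _ = (1 - y * x) * x ^ ((i : ℕ) + 1) * y ^ (n + 1) * x ^ (n + 1) := by
          simp only [mul_assoc]
      _ = 0 := by rw [one_sub_mul_mul_pow_mul_pow_eq_zero h (by omega), zero_mul]
  · rw [decompGen_eq_of_ne_zero h hi, decompDual, if_neg hj]
    rcases Nat.lt_or_gt_of_ne hij' with hlt | hgt
    · calc _ = (1 - y * x) * x ^ ((i : ℕ) + 1) * y ^ ((j : ℕ) + 1) * (1 - y * x) *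
            x ^ ((j : ℕ) + 1) := by simp only [mul_assoc]
        _ = 0 := by rw [one_sub_mul_mul_pow_mul_pow_eq_zero h (by omega), zero_mul, zero_mul]
    · calc _ = (1 - y * x) * (x ^ ((i : ℕ) + 1) * y ^ ((j : ℕ) + 1) * (1 - y * x)) *
            x ^ ((j : ℕ) + 1) := by simp only [mul_assoc]
        _ = 0 := by rw [pow_mul_pow_mul_one_sub_mul_eq_zero h (by omega), mul_zero, zero_mul]

theorem iSupIndep_span_decompGen (h : x * y = 1) (n : ℕ) :
    iSupIndep fun i : Fin n => span R {decompGen x y n i} :=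
  iSupIndep_span_singleton_of_proj (fun j => LinearMap.toSpanSingleton R R (decompDual x y n j))
    (decompGen_mul_decompDual_self h) (fun _ _ hij => decompGen_mul_decompDual_of_ne h hij)

theorem decompGen_mem_span (n : ℕ) (i : Fin n) : decompGen x y n i ∈ span R {y * x ^ 2} := by
  obtain ⟨a, k, hg⟩ : ∃ a k, decompGen x y n i = a * (y * x ^ 2) ^ (k + 1) := by
    unfold decompGen
    split_ifs with hi
    · exact ⟨1, n - 1, by rw [one_mul, Nat.sub_add_cancel i.pos]⟩
    · exact ⟨x - y * x ^ 2, (i : ℕ) - 1, by rw [Nat.sub_add_cancel (Nat.pos_of_ne_zero hi)]⟩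
  rw [hg, pow_succ (y * x ^ 2) k, ← mul_assoc]
  exact mem_span_singleton.2 ⟨_, rfl⟩

theorem decompGen_mem_iSup_span {n : ℕ} (i : Fin n) :
    decompGen x y n i ∈ ⨆ j : Fin n, span R {decompGen x y n j} :=
  mem_iSup_of_mem (p := fun j => span R {decompGen x y n j}) i (mem_span_singleton_self _)

theorem sq_pow_mem_iSup_span_decompGen (h : x * y = 1) {n m : ℕ} (hm : 1 ≤ m) (hmn : m ≤ n) :
    (y * x ^ 2) ^ m ∈ ⨆ i : Fin n, span R {decompGen x y n i} := by
  induction hmn using Nat.decreasingInduction with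
  | self =>
    have hgen := decompGen_mem_iSup_span (x := x) (y := y) (⟨0, by omega⟩ : Fin n)
    rwa [decompGen, if_pos rfl] at hgen
  | of_succ k hk ih =>
    have hgen := decompGen_mem_iSup_span (x := x) (y := y) (⟨k, hk⟩ : Fin n)
    rw [decompGen, if_neg (Nat.one_le_iff_ne_zero.mp hm)] at hgen
    rw [mul_sq_pow_eq_add h hm]
    exact add_mem (smul_mem _ y (ih (by omega))) (smul_mem _ y hgen)

theorem iSup_span_decompGen (h : x * y = 1) {n : ℕ} (hn : 0 < n) :
    ⨆ i : Fin n, span R {decompGen x y n i} = span R {y * x ^ 2} := by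
  refine le_antisymm (iSup_le fun i => (span_singleton_le_iff_mem _ _).2 (decompGen_mem_span n i))
    ((span_singleton_le_iff_mem _ _).2 ?_)
  simpa only [pow_one] using sq_pow_mem_iSup_span_decompGen h le_rfl hn

end RightInverse

theorem Xg_mul_Yg : Xg K * Yg K = 1 := by
  simpa only [Xg, Yg, map_mul, map_one] using
    RingQuot.mkAlgHom_rel K (show JacRel K (FreeAlgebra.ι K 0 * FreeAlgebra.ι K 1) 1 from ⟨rfl, rfl⟩)

theorem decompFam_eq_span_decompGen (n : ℕ) :
    decompFam K n = fun i => span (Jac K) {decompGen (Xg K) (Yg K) n i} := by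
  funext i
  unfold decompFam decompGen csE dsE
  split_ifs <;> rfl

/-- For every `n ≥ 2`, the left ideal `Ac*` is the internal direct sum
`A(c*)ⁿ ⊕ Ad*c* ⊕ Ad*(c*)² ⊕ ⋯ ⊕ Ad*(c*)^{n-1}`. -/
theorem stmt6 (n : ℕ) (hn : 2 ≤ n) :
    (⨆ i : Fin n, decompFam K n i) = Submodule.span (Jac K) {csE K} ∧
    iSupIndep (decompFam K n) := by
  rw [decompFam_eq_span_decompGen]
  exact ⟨iSup_span_decompGen (Xg_mul_Yg K) (by omega), iSupIndep_span_decompGen (Xg_mul_Yg K) n⟩
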